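/- Let m, n ≥ 1 and let d ≥ 4 be even. For (a, b), (a', b') ∈ R^{2m+2−d} ⊕ R^{2n+2−d}, the deformations (R̃_{a,b}, t, j) and (R̃_{a',b'}, t, j) of R = F[u,v]/(u^{m+1}, v^{n+1}) are isomorphic as deformations of R if and only if (a, b) = (a', b'). -/

import Mathlib

/-- A finite-dimensional graded-commutative ℤ-graded `F`-algebra
("graded F-algebra" in the sense of Seidel's paper). -/
structure GradedFAlg (F : Type) [Field F] where
  carrier : Type
  [ring : Ring carrier]
  [alg : Algebra F carrier]
  grading : ℤ → Submodule F carrier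
  [gradedAlgebra : GradedAlgebra grading]
  [findim : FiniteDimensional F carrier]
  gcomm : ∀ (i j : ℤ) (x y : carrier), x ∈ grading i → y ∈ grading j →
    x * y = ((-1 : F) ^ (i * j)) • (y * x)

attribute [instance] GradedFAlg.ring GradedFAlg.alg GradedFAlg.gradedAlgebra GradedFAlg.findim

variable {F : Type} [Field F]

/-- A homomorphism of graded `F`-algebras. -/
structure GradedFAlg.Hom (A B : GradedFAlg F) where
  toAlgHom : A.carrier →ₐ[F] B.carrier
  graded : ∀ (i : ℤ) (x : A.carrier), x ∈ A.grading i → toAlgHom x ∈ B.grading i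

/-- The identity homomorphism of graded `F`-algebras. -/
def GradedFAlg.Hom.id (A : GradedFAlg F) : GradedFAlg.Hom A A :=
  ⟨AlgHom.id F A.carrier, fun _ _ h => h⟩

/-- A `d`-dimensional (first order infinitesimal) deformation `(R̃, t, j)` of `A`:
`t ∈ R̃^d` with `t² = 0` whose annihilator is exactly `t·R̃`, and `j : R̃ → A`
a surjective homomorphism of graded algebras with kernel `t·R̃`. -/
structure Deformation (F : Type) [Field F] (A : GradedFAlg F) (d : ℤ) where
  alg : GradedFAlg F
  t : alg.carrier
  t_mem : t ∈ alg.grading d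
  t_sq : t * t = 0
  t_ann : ∀ x : alg.carrier, t * x = 0 ↔ ∃ y : alg.carrier, x = t * y
  j : GradedFAlg.Hom alg A
  j_surj : Function.Surjective j.toAlgHom
  j_ker : ∀ x : alg.carrier, j.toAlgHom x = 0 ↔ ∃ y : alg.carrier, x = t * y

/-- A morphism of deformations over a homomorphism `f` of graded `F`-algebras. -/
structure DefMorphismOver {A B : GradedFAlg F} (f : GradedFAlg.Hom A B) {d : ℤ}
    (D1 : Deformation F A d) (D2 : Deformation F B d) where
  toHom : GradedFAlg.Hom D1.alg D2.alg
  map_t : toHom.toAlgHom D1.t = D2.t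
  over_id : ∀ x, D2.j.toAlgHom (toHom.toAlgHom x) = f.toAlgHom (D1.j.toAlgHom x)

/-- Two deformations of `A` are isomorphic if there is a bijective morphism of
deformations (i.e. a morphism over the identity of `A`) between them. -/
def Deformation.Iso {A : GradedFAlg F} {d : ℤ} (D1 D2 : Deformation F A d) : Prop :=
  ∃ φ : DefMorphismOver (GradedFAlg.Hom.id A) D1 D2, Function.Bijective φ.toHom.toAlgHom

/-- `R` is (a model of) the cohomology `F[u,v]/(u^{m+1}, v^{n+1})` of
`ℂPᵐ × ℂPⁿ`: `u, v` have degree `2`, `u^{m+1} = v^{n+1} = 0`, and the monomials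
`uⁱvʲ` (`0 ≤ i ≤ m`, `0 ≤ j ≤ n`) form an `F`-basis of `R`. -/
structure IsPmnAlg (R : GradedFAlg F) (u v : R.carrier) (m n : ℕ) : Prop where
  u_mem : u ∈ R.grading 2
  v_mem : v ∈ R.grading 2
  u_pow : u ^ (m + 1) = 0
  v_pow : v ^ (n + 1) = 0
  basis : ∃ b : Module.Basis (Fin (m + 1) × Fin (n + 1)) F R.carrier,
    ∀ p : Fin (m + 1) × Fin (n + 1), b p = u ^ (p.1 : ℕ) * v ^ (p.2 : ℕ)

/-- The deformation `D` of `R = F[u,v]/(u^{m+1}, v^{n+1})` "is" the deformation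
`R̃_{a,b}` with generators `ũ, ṽ, t` of degrees `2, 2, d`, relations `t² = 0`,
`ũ^{m+1} + Σᵢ aᵢ t ũ^{i-d/2} ṽ^{m+1-i} = 0`, `ṽ^{n+1} + Σᵢ bᵢ t ũ^{i-d/2} ṽ^{n+1-i} = 0`,
and `j(ũ) = u`, `j(ṽ) = v`, `j(t) = 0`.  Since `t² = 0`, the relations are
equivalently expressed as `ũ^{m+1} + t·x = 0` for every (any) lift `x` of
`a = Σᵢ aᵢ u^{i-d/2} v^{m+1-i}` under `j`, and similarly for `b`. -/
structure IsRabDef (R : GradedFAlg F) (u v : R.carrier) (m n : ℕ) (d : ℤ)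
    (a b : R.carrier) (D : Deformation F R d) (ut vt : D.alg.carrier) : Prop where
  u_mem : ut ∈ D.alg.grading 2
  v_mem : vt ∈ D.alg.grading 2
  j_u : D.j.toAlgHom ut = u
  j_v : D.j.toAlgHom vt = v
  rel_u : ∀ x : D.alg.carrier, D.j.toAlgHom x = a → ut ^ (m + 1) + D.t * x = 0
  rel_v : ∀ x : D.alg.carrier, D.j.toAlgHom x = b → vt ^ (n + 1) + D.t * x = 0

/-!
A morphism of deformations `R̃_{a,b} → R̃_{a',b'}` must send `ũ, ṽ` to `ũ', ṽ'`: two lifts of the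
same element in degree `2` differ by `t` times an element of degree `2 - d < 0`, which vanishes.
Applying it to `ũ^{m+1} + t·ã = 0`, for a lift `ã` of `a`, and comparing with
`ũ'^{m+1} + t·ã' = 0` gives `t·(ã - ã') = 0`, so `ã - ã' ∈ t·R̃ = ker j` and `a = a'`;
likewise `b = b'`.

Conversely, the section `σ(uⁱvʲ) = ũⁱṽʲ` of `j` splits every deformation linearly as
`σ(R) ⊕ t·σ(R)`. As `t` is central with `t² = 0`, multiplication in these coordinates is
determined by the products of monomials `ũⁱṽʲ`, and the relations reduce those to the same
normal form in `R̃_{a,b}` and `R̃_{a',b'}` when `(a, b) = (a', b')`. The identity in these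
coordinates is then an isomorphism of deformations.
-/

namespace GradedFAlg

variable {A : GradedFAlg F}

theorem mul_comm_of_mem_even {i : ℤ} (hi : Even i) {x : A.carrier} (hx : x ∈ A.grading i)
    (y : A.carrier) : x * y = y * x := by
  induction y using DirectSum.Decomposition.inductionOn A.grading with
  | zero => simp
  | homogeneous z =>
    rw [A.gcomm i _ x z hx z.2, Even.neg_one_zpow (hi.mul_right _), one_smul]
  | add y₁ y₂ h₁ h₂ => rw [mul_add, add_mul, h₁, h₂]

theorem pow_mul_pow_mem {x y : A.carrier} (hx : x ∈ A.grading 2) (hy : y ∈ A.grading 2)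
    (i j : ℕ) : x ^ i * y ^ j ∈ A.grading (2 * i + 2 * j) := by
  convert SetLike.mul_mem_graded (SetLike.pow_mem_graded i hx) (SetLike.pow_mem_graded j hy)
    using 2
  simp only [nsmul_eq_mul]
  ring

theorem mul_eq_mul_decompose {d k : ℤ} {t y : A.carrier} (ht : t ∈ A.grading d)
    (hty : t * y ∈ A.grading k) : t * y = t * DirectSum.decompose A.grading y (k - d) := by
  classical
  rw [← DirectSum.coe_decompose_mul_add_of_left_mem A.grading ht, add_sub_cancel,
    DirectSum.decompose_of_mem_same _ hty]

theorem eq_sum_basis_of_mem {ι : Type*} [Fintype ι] (b : Module.Basis ι F A.carrier)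
    (δ : ι → ℤ) (hb : ∀ i, b i ∈ A.grading (δ i)) {k : ℤ} {r : A.carrier}
    (hr : r ∈ A.grading k) : r = ∑ i with δ i = k, b.repr r i • b i := by
  classical
  calc r = GradedAlgebra.proj A.grading k r := (DirectSum.decompose_of_mem_same _ hr).symm
    _ = ∑ i, if δ i = k then b.repr r i • b i else 0 := by
      conv_lhs => rw [← b.sum_repr r]
      rw [map_sum]
      refine Finset.sum_congr rfl fun i _ => ?_
      rw [map_smul, GradedAlgebra.proj_apply]
      split_ifs with hi
      · rw [DirectSum.decompose_of_mem_same _ (hi ▸ hb i)]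
      · rw [DirectSum.decompose_of_mem_ne _ (hb i) hi, smul_zero]
    _ = _ := (Finset.sum_filter _ _).symm

end GradedFAlg

namespace Deformation

variable {A : GradedFAlg F} {d : ℤ}

section

variable (D : Deformation F A d)

theorem j_t : D.j.toAlgHom D.t = 0 :=
  (D.j_ker _).mpr ⟨1, (mul_one _).symm⟩

theorem t_mul_eq_zero_iff {x : D.alg.carrier} : D.t * x = 0 ↔ D.j.toAlgHom x = 0 :=
  (D.t_ann x).trans (D.j_ker x).symm

theorem t_mul_inj_iff {x y : D.alg.carrier} :
    D.t * x = D.t * y ↔ D.j.toAlgHom x = D.j.toAlgHom y := by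
  rw [← sub_eq_zero, ← mul_sub, t_mul_eq_zero_iff, map_sub, sub_eq_zero]

theorem eq_of_mem_grading_of_j_eq {k : ℤ} (hA : ∀ x ∈ A.grading (k - d), x = 0)
    {w w' : D.alg.carrier} (hw : w ∈ D.alg.grading k) (hw' : w' ∈ D.alg.grading k)
    (hj : D.j.toAlgHom w = D.j.toAlgHom w') : w = w' := by
  classical
  obtain ⟨y, hy⟩ := (D.j_ker (w - w')).mp (by rw [map_sub, hj, sub_self])
  set y₀ := DirectSum.decompose D.alg.grading y (k - d)
  have hty : D.t * y = D.t * y₀ :=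
    GradedFAlg.mul_eq_mul_decompose D.t_mem (hy ▸ Submodule.sub_mem _ hw hw')
  have hy₀ : D.t * y₀ = 0 := D.t_mul_eq_zero_iff.mpr (hA _ (D.j.graded _ _ y₀.2))
  rw [← sub_eq_zero, hy, hty, hy₀]

end

variable {D : Deformation F A d}

/-- For a linear section `s` of `j`, this identifies `A ⊕ A[-d]` with the deformation. -/
def splitting (s : A.carrier →ₗ[F] D.alg.carrier) :
    A.carrier × A.carrier →ₗ[F] D.alg.carrier :=
  s ∘ₗ LinearMap.fst F _ _ + LinearMap.mulLeft F D.t ∘ₗ s ∘ₗ LinearMap.snd F _ _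

section Splitting

variable {s : A.carrier →ₗ[F] D.alg.carrier}

@[simp]
theorem splitting_apply (r p : A.carrier) : splitting s (r, p) = s r + D.t * s p := rfl

theorem t_mul_eq_t_mul_section (hs : ∀ r, D.j.toAlgHom (s r) = r) (x : D.alg.carrier) :
    D.t * x = D.t * s (D.j.toAlgHom x) :=
  D.t_mul_inj_iff.mpr (hs _).symm

theorem j_splitting (hs : ∀ r, D.j.toAlgHom (s r) = r) (r p : A.carrier) :
    D.j.toAlgHom (splitting s (r, p)) = r := by
  rw [splitting_apply, map_add, map_mul, j_t, zero_mul, add_zero, hs]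

theorem splitting_bijective (hs : ∀ r, D.j.toAlgHom (s r) = r) :
    Function.Bijective (splitting s) := by
  refine ⟨(injective_iff_map_eq_zero _).mpr ?_, fun x => ?_⟩
  · rintro ⟨r, p⟩ hz
    obtain rfl : r = 0 := by rw [← j_splitting hs r p, hz, map_zero]
    have hp : D.t * s p = 0 := by simpa using hz
    rw [t_mul_eq_zero_iff, hs] at hp
    rw [hp, Prod.mk_zero_zero]
  · obtain ⟨y, hy⟩ := (D.j_ker (x - s (D.j.toAlgHom x))).mp (by rw [map_sub, hs, sub_self])
    refine ⟨(D.j.toAlgHom x, D.j.toAlgHom y), ?_⟩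
    rw [splitting_apply, ← t_mul_eq_t_mul_section hs, ← hy, add_sub_cancel]

noncomputable def splittingEquiv (hs : ∀ r, D.j.toAlgHom (s r) = r) :
    (A.carrier × A.carrier) ≃ₗ[F] D.alg.carrier :=
  LinearEquiv.ofBijective _ (splitting_bijective hs)

@[simp]
theorem splittingEquiv_symm_splitting (hs : ∀ r, D.j.toAlgHom (s r) = r)
    (z : A.carrier × A.carrier) :
    (splittingEquiv hs).symm (splitting s z) = z :=
  (splittingEquiv hs).symm_apply_apply z

theorem splitting_mul (heven : Even d) (hs : ∀ r, D.j.toAlgHom (s r) = r)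
    (r p r' p' : A.carrier) :
    splitting s (r, p) * splitting s (r', p') =
      s r * s r' + splitting s (0, r * p' + p * r') := by
  have ht : ∀ y, y * D.t = D.t * y :=
    fun y => (D.alg.mul_comm_of_mem_even heven D.t_mem y).symm
  have e₁ : s r * (D.t * s p') = D.t * s (r * p') := by
    rw [← mul_assoc, ht, mul_assoc, t_mul_eq_t_mul_section hs, map_mul, hs, hs]
  have e₂ : D.t * s p * s r' = D.t * s (p * r') := by
    rw [mul_assoc, t_mul_eq_t_mul_section hs, map_mul, hs, hs]
  have e₃ : D.t * s p * (D.t * s p') = 0 := by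
    rw [mul_assoc, ← mul_assoc (s p), ht, ← mul_assoc, ← mul_assoc, D.t_sq, zero_mul,
      zero_mul]
  simp only [splitting_apply, add_mul, mul_add, e₁, e₂, e₃, map_zero, map_add]
  abel

theorem splitting_mem_grading_iff (hs : ∀ r, D.j.toAlgHom (s r) = r)
    (hsg : ∀ k r, r ∈ A.grading k → s r ∈ D.alg.grading k) {k : ℤ} {r p : A.carrier} :
    splitting s (r, p) ∈ D.alg.grading k ↔ r ∈ A.grading k ∧ p ∈ A.grading (k - d) := by
  classical
  constructor
  · intro hx
    have hr : r ∈ A.grading k := j_splitting hs r p ▸ D.j.graded k _ hx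
    have htp : D.t * s p ∈ D.alg.grading k := by
      simpa using Submodule.sub_mem _ hx (hsg k r hr)
    set y₀ := DirectSum.decompose D.alg.grading (s p) (k - d)
    have hp : p = D.j.toAlgHom y₀ := by
      rw [← hs p, ← t_mul_inj_iff]
      exact GradedFAlg.mul_eq_mul_decompose D.t_mem htp
    exact ⟨hr, hp ▸ D.j.graded _ _ y₀.2⟩
  · rintro ⟨hr, hp⟩
    refine Submodule.add_mem _ (hsg k r hr) ?_
    simpa using SetLike.mul_mem_graded D.t_mem (hsg _ p hp)

end Splitting

theorem iso_of_splittingEquiv_symm_mul (heven : Even d) {D D' : Deformation F A d}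
    {s : A.carrier →ₗ[F] D.alg.carrier} {s' : A.carrier →ₗ[F] D'.alg.carrier}
    (hs : ∀ r, D.j.toAlgHom (s r) = r) (hs' : ∀ r, D'.j.toAlgHom (s' r) = r)
    (hsg : ∀ k r, r ∈ A.grading k → s r ∈ D.alg.grading k)
    (hsg' : ∀ k r, r ∈ A.grading k → s' r ∈ D'.alg.grading k)
    (hs₁ : s 1 = 1) (hs₁' : s' 1 = 1)
    (hmul : ∀ r r', (splittingEquiv hs).symm (s r * s r') =
      (splittingEquiv hs').symm (s' r * s' r')) :
    D.Iso D' := by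
  set e := (splittingEquiv hs).symm ≪≫ₗ splittingEquiv hs'
  have he : ∀ z, e (splitting s z) = splitting s' z :=
    fun z => congrArg (splittingEquiv hs') (splittingEquiv_symm_splitting hs z)
  have hsurj : ∀ x, ∃ z, splitting s z = x := (splitting_bijective hs).2
  have hone : (1 : D.alg.carrier) = splitting s (1, 0) := by simp [hs₁]
  have ht : D.t = splitting s (0, 1) := by simp [hs₁]
  have hmul_e : ∀ x y, e (x * y) = e x * e y := by
    rintro x y
    obtain ⟨⟨r, p⟩, rfl⟩ := hsurj x
    obtain ⟨⟨r', p'⟩, rfl⟩ := hsurj y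
    have hss : e (s r * s r') = s' r * s' r' :=
      (congrArg (splittingEquiv hs') (hmul r r')).trans
        ((splittingEquiv hs').apply_symm_apply _)
    rw [splitting_mul heven hs, map_add, hss, he, he, he, splitting_mul heven hs']
  have hgraded : ∀ k x, x ∈ D.alg.grading k → e x ∈ D'.alg.grading k := by
    rintro k x hx
    obtain ⟨z, rfl⟩ := hsurj x
    rw [he, splitting_mem_grading_iff hs' hsg']
    exact (splitting_mem_grading_iff hs hsg).mp hx
  refine ⟨⟨⟨AlgHom.ofLinearMap e.toLinearMap ?_ hmul_e, hgraded⟩, ?_, fun x => ?_⟩,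
    e.bijective⟩
  · change e 1 = 1
    rw [hone, he]
    simp [hs₁']
  · change e D.t = D'.t
    rw [ht, he]
    simp [hs₁']
  · obtain ⟨⟨r, p⟩, rfl⟩ := hsurj x
    simp only [AlgHom.ofLinearMap_apply, LinearEquiv.coe_coe, he, j_splitting hs,
      j_splitting hs']
    rfl

end Deformation

namespace DefMorphismOver

variable {A : GradedFAlg F} {d : ℤ} {D D' : Deformation F A d}
  (φ : DefMorphismOver (GradedFAlg.Hom.id A) D D')

theorem map_eq_of_mem_grading {k : ℤ} (hA : ∀ x ∈ A.grading (k - d), x = 0)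
    {w : D.alg.carrier} {w' : D'.alg.carrier} (hw : w ∈ D.alg.grading k)
    (hw' : w' ∈ D'.alg.grading k) (hj : D.j.toAlgHom w = D'.j.toAlgHom w') :
    φ.toHom.toAlgHom w = w' :=
  D'.eq_of_mem_grading_of_j_eq hA (φ.toHom.graded k w hw) hw' ((φ.over_id w).trans hj)

theorem eq_of_relation {w : D.alg.carrier} {c c' : A.carrier}
    (hrel : ∀ x, D.j.toAlgHom x = c → w + D.t * x = 0)
    (hrel' : ∀ x, D'.j.toAlgHom x = c' → φ.toHom.toAlgHom w + D'.t * x = 0) : c = c' := by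
  obtain ⟨x, rfl⟩ := D.j_surj c
  obtain ⟨x', rfl⟩ := D'.j_surj c'
  have hφ := congrArg φ.toHom.toAlgHom (hrel x rfl)
  rw [map_add, map_mul, φ.map_t, map_zero] at hφ
  have htt := add_left_cancel (hφ.trans (hrel' x' rfl).symm)
  rw [D'.t_mul_inj_iff, φ.over_id] at htt
  exact htt

end DefMorphismOver

namespace IsPmnAlg

variable {R : GradedFAlg F} {u v : R.carrier} {m n : ℕ}

section

variable (hR : IsPmnAlg R u v m n)

noncomputable def monomialBasis : Module.Basis (Fin (m + 1) × Fin (n + 1)) F R.carrier :=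
  hR.basis.choose

theorem monomialBasis_apply (p : Fin (m + 1) × Fin (n + 1)) :
    hR.monomialBasis p = u ^ (p.1 : ℕ) * v ^ (p.2 : ℕ) :=
  hR.basis.choose_spec p

theorem monomialBasis_mem (p : Fin (m + 1) × Fin (n + 1)) :
    hR.monomialBasis p ∈ R.grading (2 * (p.1 : ℕ) + 2 * (p.2 : ℕ)) :=
  hR.monomialBasis_apply p ▸ GradedFAlg.pow_mul_pow_mem hR.u_mem hR.v_mem _ _

end

theorem eq_zero_of_mem_grading_of_neg (hR : IsPmnAlg R u v m n) {k : ℤ} (hk : k < 0)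
    {x : R.carrier} (hx : x ∈ R.grading k) : x = 0 := by
  rw [GradedFAlg.eq_sum_basis_of_mem _ _ hR.monomialBasis_mem hx]
  refine Finset.sum_eq_zero fun p hp => absurd (Finset.mem_filter.mp hp).2 ?_
  omega

variable (hR : IsPmnAlg R u v m n) {B C : Type} [Ring B] [Algebra F B] [Ring C] [Algebra F C]

noncomputable def monomialLift (x y : B) : R.carrier →ₗ[F] B :=
  hR.monomialBasis.constr F fun p => x ^ (p.1 : ℕ) * y ^ (p.2 : ℕ)

theorem monomialLift_basis (x y : B) (p : Fin (m + 1) × Fin (n + 1)) :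
    hR.monomialLift x y (hR.monomialBasis p) = x ^ (p.1 : ℕ) * y ^ (p.2 : ℕ) :=
  hR.monomialBasis.constr_basis F _ p

theorem monomialLift_one (x y : B) : hR.monomialLift x y 1 = 1 := by
  simpa [monomialBasis_apply] using hR.monomialLift_basis x y (0, 0)

theorem map_monomialLift (f : B →ₐ[F] C) (x y : B) (r : R.carrier) :
    f (hR.monomialLift x y r) = hR.monomialLift (f x) (f y) r := by
  change (f.toLinearMap ∘ₗ hR.monomialLift x y) r = _
  congr 1
  refine hR.monomialBasis.ext fun p => ?_
  simp [monomialLift_basis]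

theorem monomialLift_self (r : R.carrier) : hR.monomialLift u v r = r := by
  change _ = LinearMap.id (R := F) r
  congr 1
  refine hR.monomialBasis.ext fun p => ?_
  rw [monomialLift_basis, LinearMap.id_apply, monomialBasis_apply]

theorem monomialLift_mem {A : GradedFAlg F} {x y : A.carrier} (hx : x ∈ A.grading 2)
    (hy : y ∈ A.grading 2) {k : ℤ} {r : R.carrier} (hr : r ∈ R.grading k) :
    hR.monomialLift x y r ∈ A.grading k := by
  rw [GradedFAlg.eq_sum_basis_of_mem _ _ hR.monomialBasis_mem hr, map_sum]
  refine Submodule.sum_mem _ fun p hp => ?_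
  rw [map_smul, monomialLift_basis, ← (Finset.mem_filter.mp hp).2]
  exact Submodule.smul_mem _ _ (GradedFAlg.pow_mul_pow_mem hx hy _ _)

theorem monomialLift_mul {M : Type} [AddCommGroup M] [Module F M] {x y : B} {x' y' : C}
    (hxy : Commute x y) (hxy' : Commute x' y') (f : B →ₗ[F] M) (f' : C →ₗ[F] M)
    (hf : ∀ P Q : ℕ, f (x ^ P * y ^ Q) = f' (x' ^ P * y' ^ Q)) (r r' : R.carrier) :
    f (hR.monomialLift x y r * hR.monomialLift x y r') =
      f' (hR.monomialLift x' y' r * hR.monomialLift x' y' r') := by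
  have hprod : ∀ {E : Type} [Ring E] {x y : E}, Commute x y → ∀ i j k l : ℕ,
      x ^ i * y ^ j * (x ^ k * y ^ l) = x ^ (i + k) * y ^ (j + l) := by
    intro E _ x y hxy i j k l
    rw [pow_add, pow_add, (hxy.pow_pow k j).symm.mul_mul_mul_comm]
  have key :
      ((LinearMap.mul F B).compl₁₂ (hR.monomialLift x y) (hR.monomialLift x y)).compr₂ f =
        ((LinearMap.mul F C).compl₁₂ (hR.monomialLift x' y')
          (hR.monomialLift x' y')).compr₂ f' :=
    LinearMap.ext_basis hR.monomialBasis hR.monomialBasis fun p q => by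
      simp only [LinearMap.compr₂_apply, LinearMap.compl₁₂_apply, LinearMap.mul_apply',
        monomialLift_basis, hprod hxy, hprod hxy', hf]
  exact LinearMap.congr_fun₂ key r r'

end IsPmnAlg

namespace IsRabDef

open Deformation

variable {R : GradedFAlg F} {u v : R.carrier} {m n : ℕ} {d : ℤ} {a b : R.carrier}
  {D : Deformation F R d} {ut vt : D.alg.carrier}

theorem commute (h : IsRabDef R u v m n d a b D ut vt) : Commute ut vt :=
  D.alg.mul_comm_of_mem_even even_two h.u_mem vt

theorem j_monomialLift (hR : IsPmnAlg R u v m n) (h : IsRabDef R u v m n d a b D ut vt)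
    (r : R.carrier) : D.j.toAlgHom (hR.monomialLift ut vt r) = r := by
  rw [hR.map_monomialLift, h.j_u, h.j_v, hR.monomialLift_self]

theorem pow_add_mul_pow (hR : IsPmnAlg R u v m n) (h : IsRabDef R u v m n d a b D ut vt)
    (c Q : ℕ) : ut ^ (m + 1 + c) * vt ^ Q =
      splitting (hR.monomialLift ut vt) (0, -(a * (u ^ c * v ^ Q))) := by
  have hs := h.j_monomialLift hR
  rw [pow_add, mul_assoc, eq_neg_of_add_eq_zero_left (h.rel_u _ (hs a)), splitting_apply,
    map_zero, zero_add, map_neg, mul_neg, neg_mul, neg_inj, mul_assoc, t_mul_inj_iff]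
  simp only [map_mul, map_pow, hs, h.j_u, h.j_v]

theorem pow_mul_pow_add (hR : IsPmnAlg R u v m n) (h : IsRabDef R u v m n d a b D ut vt)
    (P c : ℕ) : ut ^ P * vt ^ (n + 1 + c) =
      splitting (hR.monomialLift ut vt) (0, -(b * (u ^ P * v ^ c))) := by
  have hs := h.j_monomialLift hR
  rw [pow_add, ← mul_assoc, (h.commute.pow_pow P (n + 1)).eq, mul_assoc,
    eq_neg_of_add_eq_zero_left (h.rel_v _ (hs b)), splitting_apply,
    map_zero, zero_add, map_neg, mul_neg, neg_mul, neg_inj, mul_assoc, t_mul_inj_iff]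
  simp only [map_mul, map_pow, hs, h.j_u, h.j_v]

theorem splittingEquiv_symm_pow_mul_pow (hR : IsPmnAlg R u v m n)
    (h : IsRabDef R u v m n d a b D ut vt) {D' : Deformation F R d} {ut' vt' : D'.alg.carrier}
    (h' : IsRabDef R u v m n d a b D' ut' vt') (P Q : ℕ) :
    (splittingEquiv (h.j_monomialLift hR)).symm (ut ^ P * vt ^ Q) =
      (splittingEquiv (h'.j_monomialLift hR)).symm (ut' ^ P * vt' ^ Q) := by
  suffices ∃ z, splitting (hR.monomialLift ut vt) z = ut ^ P * vt ^ Q ∧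
      splitting (hR.monomialLift ut' vt') z = ut' ^ P * vt' ^ Q by
    obtain ⟨z, hz, hz'⟩ := this
    rw [← hz, ← hz', splittingEquiv_symm_splitting, splittingEquiv_symm_splitting]
  rcases lt_or_ge m P with hP | hP
  · obtain ⟨c, rfl⟩ := Nat.exists_eq_add_of_le hP
    exact ⟨_, (h.pow_add_mul_pow hR c Q).symm, (h'.pow_add_mul_pow hR c Q).symm⟩
  rcases lt_or_ge n Q with hQ | hQ
  · obtain ⟨c, rfl⟩ := Nat.exists_eq_add_of_le hQ
    exact ⟨_, (h.pow_mul_pow_add hR P c).symm, (h'.pow_mul_pow_add hR P c).symm⟩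
  refine ⟨(hR.monomialBasis (⟨P, by omega⟩, ⟨Q, by omega⟩), 0), ?_, ?_⟩ <;>
    simp [hR.monomialLift_basis]

theorem iso (heven : Even d) (hR : IsPmnAlg R u v m n) (h : IsRabDef R u v m n d a b D ut vt)
    {D' : Deformation F R d} {ut' vt' : D'.alg.carrier}
    (h' : IsRabDef R u v m n d a b D' ut' vt') : D.Iso D' :=
  iso_of_splittingEquiv_symm_mul heven (h.j_monomialLift hR) (h'.j_monomialLift hR)
    (fun _ _ => hR.monomialLift_mem h.u_mem h.v_mem)
    (fun _ _ => hR.monomialLift_mem h'.u_mem h'.v_mem)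
    (hR.monomialLift_one _ _) (hR.monomialLift_one _ _)
    (hR.monomialLift_mul h.commute h'.commute _ _ (h.splittingEquiv_symm_pow_mul_pow hR h'))

theorem eq_of_defMorphismOver (h : IsRabDef R u v m n d a b D ut vt) {a' b' : R.carrier}
    {D' : Deformation F R d} {ut' vt' : D'.alg.carrier}
    (h' : IsRabDef R u v m n d a' b' D' ut' vt')
    (hneg : ∀ x ∈ R.grading (2 - d), x = 0)
    (φ : DefMorphismOver (GradedFAlg.Hom.id R) D D') : a = a' ∧ b = b' := by
  have hut := φ.map_eq_of_mem_grading hneg h.u_mem h'.u_mem (h.j_u.trans h'.j_u.symm)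
  have hvt := φ.map_eq_of_mem_grading hneg h.v_mem h'.v_mem (h.j_v.trans h'.j_v.symm)
  refine ⟨φ.eq_of_relation h.rel_u ?_, φ.eq_of_relation h.rel_v ?_⟩
  · rw [map_pow, hut]
    exact h'.rel_u
  · rw [map_pow, hvt]
    exact h'.rel_v

end IsRabDef

theorem Rab_iso_iff_eq_general
    {F : Type} [Field F] (R : GradedFAlg F) (u v : R.carrier) (m n : ℕ)
    (hR : IsPmnAlg R u v m n)
    (d : ℤ) (hd4 : 4 ≤ d) (heven : Even d)
    (a b a' b' : R.carrier)
    (D D' : Deformation F R d) (ut vt : D.alg.carrier) (ut' vt' : D'.alg.carrier)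
    (h : IsRabDef R u v m n d a b D ut vt) (h' : IsRabDef R u v m n d a' b' D' ut' vt') :
    Deformation.Iso D D' ↔ (a = a' ∧ b = b') := by
  constructor
  · rintro ⟨φ, -⟩
    exact h.eq_of_defMorphismOver h'
      (fun x hx => hR.eq_zero_of_mem_grading_of_neg (by omega) hx) φ
  · rintro ⟨rfl, rfl⟩
    exact h.iso heven hR h'

/-- Let `R = F[u,v]/(u^{m+1}, v^{n+1})` with `m, n ≥ 1` and let
`d ≥ 4` be even. For `(a, b), (a', b') ∈ R^{2m+2−d} ⊕ R^{2n+2−d}`, the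
deformations `(R̃_{a,b}, t, j)` and `(R̃_{a',b'}, t, j)` of `R` are isomorphic
as deformations of `R` if and only if `(a, b) = (a', b')`. -/
theorem Rab_iso_iff_eq
    {F : Type} [Field F] (R : GradedFAlg F) (u v : R.carrier) (m n : ℕ)
    (hm : 1 ≤ m) (hn : 1 ≤ n) (hR : IsPmnAlg R u v m n)
    (d : ℤ) (hd4 : 4 ≤ d) (heven : Even d)
    (a b a' b' : R.carrier)
    (ha : a ∈ R.grading (2 * (m : ℤ) + 2 - d)) (hb : b ∈ R.grading (2 * (n : ℤ) + 2 - d))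
    (ha' : a' ∈ R.grading (2 * (m : ℤ) + 2 - d)) (hb' : b' ∈ R.grading (2 * (n : ℤ) + 2 - d))
    (D D' : Deformation F R d) (ut vt : D.alg.carrier) (ut' vt' : D'.alg.carrier)
    (h : IsRabDef R u v m n d a b D ut vt) (h' : IsRabDef R u v m n d a' b' D' ut' vt') :
    Deformation.Iso D D' ↔ (a = a' ∧ b = b') :=
  Rab_iso_iff_eq_general R u v m n hR d hd4 heven a b a' b' D D' ut vt ut' vt' h h'
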